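/- arXiv:1402.6673 — 9 statements merged into one kernel-verified Lean document; each statement's English description precedes it below -/
import Mathlib

section
/- Every qualgebra (Q, ⊲, ⊲̃, ⋄) satisfies, for all a,b,c ∈ Q: (i) a ⊲̃ (b ⋄ c) = (a ⊲̃ c) ⊲̃ b; (ii) (a ⋄ b) ⊲̃ c = (a ⊲̃ c) ⋄ (b ⊲̃ c); (iii) (a ⊲̃ b) ⋄ b = b ⋄ a. -/
/-! Since `x ↦ x ⊲ c` is a bijection with inverse `x ↦ x ⊲̃ c`, an identity `y ⊲̃ c = x` follows from
`x ⊲ c = y`; identities (i) and (ii) are thereby reduced to (QA_Comp) and (QA_D), and (iii) is an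
instance of (QA_Comm). -/

section

variable {Q : Type*} {tri trid dia : Q → Q → Q}

theorem trid_eq_of_tri_eq (h_trid_tri : ∀ a b, trid (tri a b) b = a) {x y c : Q}
    (h : tri x c = y) : trid y c = x :=
  h ▸ h_trid_tri x c

theorem trid_dia (h_trid_tri : ∀ a b, trid (tri a b) b = a)
    (h_tri_trid : ∀ a b, tri (trid a b) b = a)
    (h_comp : ∀ a b c, tri a (dia b c) = tri (tri a b) c) (a b c : Q) :
    trid a (dia b c) = trid (trid a c) b :=
  trid_eq_of_tri_eq h_trid_tri (by rw [h_comp, h_tri_trid, h_tri_trid])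

theorem trid_dia_distrib (h_trid_tri : ∀ a b, trid (tri a b) b = a)
    (h_tri_trid : ∀ a b, tri (trid a b) b = a)
    (h_d : ∀ a b c, tri (dia a b) c = dia (tri a c) (tri b c)) (a b c : Q) :
    trid (dia a b) c = dia (trid a c) (trid b c) :=
  trid_eq_of_tri_eq h_trid_tri (by rw [h_d, h_tri_trid, h_tri_trid])

theorem dia_trid_self (h_tri_trid : ∀ a b, tri (trid a b) b = a)
    (h_comm : ∀ a b, dia a b = dia b (tri a b)) (a b : Q) :
    dia (trid a b) b = dia b a := by
  rw [h_comm, h_tri_trid]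

end

theorem qualgebra_trid_properties_general {Q : Type*} (tri trid dia : Q → Q → Q)
    (h_inv : ∀ a b, trid (tri a b) b = a ∧ tri (trid a b) b = a)
    (h_comp : ∀ a b c, tri a (dia b c) = tri (tri a b) c)
    (h_d : ∀ a b c, tri (dia a b) c = dia (tri a c) (tri b c))
    (h_comm : ∀ a b, dia a b = dia b (tri a b)) :
    (∀ a b c, trid a (dia b c) = trid (trid a c) b) ∧
    (∀ a b c, trid (dia a b) c = dia (trid a c) (trid b c)) ∧
    (∀ a b, dia (trid a b) b = dia b a) := by
  have h_trid_tri : ∀ a b, trid (tri a b) b = a := fun a b => (h_inv a b).1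
  have h_tri_trid : ∀ a b, tri (trid a b) b = a := fun a b => (h_inv a b).2
  exact ⟨trid_dia h_trid_tri h_tri_trid h_comp, trid_dia_distrib h_trid_tri h_tri_trid h_d,
    dia_trid_self h_tri_trid h_comm⟩

/-- Every qualgebra satisfies the three compatibility relations between `⋄` and `⊲̃`. -/
theorem qualgebra_trid_properties {Q : Type*} (tri trid dia : Q → Q → Q)
    (h_sd : ∀ a b c, tri (tri a b) c = tri (tri a c) (tri b c))
    (h_inv : ∀ a b, trid (tri a b) b = a ∧ tri (trid a b) b = a)
    (h_idem : ∀ a, tri a a = a)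
    (h_comp : ∀ a b c, tri a (dia b c) = tri (tri a b) c)
    (h_d : ∀ a b c, tri (dia a b) c = dia (tri a c) (tri b c))
    (h_comm : ∀ a b, dia a b = dia b (tri a b)) :
    (∀ a b c, trid a (dia b c) = trid (trid a c) b) ∧
    (∀ a b c, trid (dia a b) c = dia (trid a c) (trid b c)) ∧
    (∀ a b, dia (trid a b) b = dia b a) :=
  qualgebra_trid_properties_general tri trid dia h_inv h_comp h_d h_comm
end

section
/- Let (Q, ⊲, ⊲̃, ⋄) be a qualgebra and, for a ∈ Q, let S_a : Q → Q be the right translation x ↦ x ⊲ a. Then: (i) each S_a is a bijection of Q with inverse x ↦ x ⊲̃ a; (ii) each S_a respects both operations, i.e., S_a(x ⊲ y) = S_a(x) ⊲ S_a(y) and S_a(x ⋄ y) = S_a(x) ⋄ S_a(y) for all x,y ∈ Q; (iii) S_{a⋄b} = S_b ∘ S_a for all a,b ∈ Q; (iv) S_{a⊲b} = S_b ∘ S_a ∘ S_b⁻¹ for all a,b ∈ Q. -/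
theorem tri_tri_eq_tri_tri_trid {Q : Type*} {tri trid : Q → Q → Q}
    (h_sd : ∀ a b c, tri (tri a b) c = tri (tri a c) (tri b c))
    (h_rinv : ∀ a b, tri (trid a b) b = a) (x a b : Q) :
    tri x (tri a b) = tri (tri (trid x b) a) b := by
  conv_lhs => rw [← h_rinv x b]
  rw [← h_sd]

theorem qualgebra_right_translations_general {Q : Type*} (tri trid dia : Q → Q → Q)
    (h_sd : ∀ a b c, tri (tri a b) c = tri (tri a c) (tri b c))
    (h_inv : ∀ a b, trid (tri a b) b = a ∧ tri (trid a b) b = a)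
    (h_comp : ∀ a b c, tri a (dia b c) = tri (tri a b) c)
    (h_d : ∀ a b c, tri (dia a b) c = dia (tri a c) (tri b c)) :
    let S : Q → Q → Q := fun a x => tri x a
    (∀ a : Q, Function.Bijective (S a) ∧
      Function.LeftInverse (fun x => trid x a) (S a) ∧
      Function.RightInverse (fun x => trid x a) (S a)) ∧
    (∀ a x y : Q, S a (tri x y) = tri (S a x) (S a y)) ∧
    (∀ a x y : Q, S a (dia x y) = dia (S a x) (S a y)) ∧
    (∀ a b : Q, S (dia a b) = S b ∘ S a) ∧
    (∀ a b : Q, S (tri a b) = S b ∘ S a ∘ (fun x => trid x b)) := by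
  intro S
  have left_inv (a : Q) : Function.LeftInverse (fun x => trid x a) (S a) :=
    fun x => (h_inv x a).1
  have right_inv (a : Q) : Function.RightInverse (fun x => trid x a) (S a) :=
    fun x => (h_inv x a).2
  refine ⟨fun a => ⟨⟨(left_inv a).injective, (right_inv a).surjective⟩, left_inv a, right_inv a⟩,
    fun a x y => h_sd x y a, fun a x y => h_d x y a,
    fun a b => funext fun x => h_comp x a b,
    fun a b => funext fun x => tri_tri_eq_tri_tri_trid h_sd (fun x b => (h_inv x b).2) x a b⟩

/-- In a qualgebra, the right translations `S_a : x ↦ x ⊲ a` are bijections (with inverse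
`x ↦ x ⊲̃ a`) respecting both operations, and `S : a ↦ S_a` turns `⋄` into composition and
`⊲` into conjugation. -/
theorem qualgebra_right_translations {Q : Type*} (tri trid dia : Q → Q → Q)
    (h_sd : ∀ a b c, tri (tri a b) c = tri (tri a c) (tri b c))
    (h_inv : ∀ a b, trid (tri a b) b = a ∧ tri (trid a b) b = a)
    (h_idem : ∀ a, tri a a = a)
    (h_comp : ∀ a b c, tri a (dia b c) = tri (tri a b) c)
    (h_d : ∀ a b c, tri (dia a b) c = dia (tri a c) (tri b c))
    (h_comm : ∀ a b, dia a b = dia b (tri a b)) :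
    let S : Q → Q → Q := fun a x => tri x a
    (∀ a : Q, Function.Bijective (S a) ∧
      Function.LeftInverse (fun x => trid x a) (S a) ∧
      Function.RightInverse (fun x => trid x a) (S a)) ∧
    (∀ a x y : Q, S a (tri x y) = tri (S a x) (S a y)) ∧
    (∀ a x y : Q, S a (dia x y) = dia (S a x) (S a y)) ∧
    (∀ a b : Q, S (dia a b) = S b ∘ S a) ∧
    (∀ a b : Q, S (tri a b) = S b ∘ S a ∘ (fun x => trid x b)) :=
  qualgebra_right_translations_general tri trid dia h_sd h_inv h_comp h_d
end

section
/- Let (Q, ⊲, ⊲̃, ⋄) be a nonempty finite qualgebra and, for a ∈ Q, let S_a : Q → Q be the bijection x ↦ x ⊲ a. Then the image {S_a : a ∈ Q} is a subgroup of the group of permutations of Q: it contains the identity map, is closed under composition, and is closed under taking inverses. -/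
/-! By `QA_Comp`, `S_{b ⋄ c} = S_c ∘ S_b`, so the translations form a nonempty set of functions
closed under composition. Each translation is injective, hence a permutation of the finite set
`Q`, hence of finite order `n + 1`; then `S_a ^ (n + 1) = id` and `S_a ^ (2 n + 1)`, an inverse of
`S_a`, are again translations. -/

section MulClosed

variable {M : Type*} [Monoid M] {S : Set M}

theorem pow_succ_mem_of_mul_mem (hS : ∀ x ∈ S, ∀ y ∈ S, x * y ∈ S) {x : M} (hx : x ∈ S) :
    ∀ n : ℕ, x ^ (n + 1) ∈ S
  | 0 => by rwa [zero_add, pow_one]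
  | n + 1 => by
    rw [pow_succ]
    exact hS _ (pow_succ_mem_of_mul_mem hS hx n) _ hx

theorem IsOfFinOrder.one_mem_of_mul_mem {x : M} (hfin : IsOfFinOrder x)
    (hS : ∀ x ∈ S, ∀ y ∈ S, x * y ∈ S) (hx : x ∈ S) : (1 : M) ∈ S := by
  obtain ⟨n, hn⟩ := Nat.exists_eq_add_one_of_ne_zero hfin.orderOf_pos.ne'
  rw [← pow_orderOf_eq_one x, hn]
  exact pow_succ_mem_of_mul_mem hS hx n

theorem IsOfFinOrder.exists_inverse_mem_of_mul_mem {x : M} (hfin : IsOfFinOrder x)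
    (hS : ∀ x ∈ S, ∀ y ∈ S, x * y ∈ S) (hx : x ∈ S) :
    ∃ y ∈ S, x * y = 1 ∧ y * x = 1 := by
  obtain ⟨n, hn⟩ := Nat.exists_eq_add_one_of_ne_zero hfin.orderOf_pos.ne'
  have hpow : x ^ (n + 1) = 1 := by rw [← hn, pow_orderOf_eq_one]
  have hinv : x * x ^ (n + n + 1) = 1 := by
    rw [← pow_succ', show n + n + 1 + 1 = (n + 1) + (n + 1) by omega, pow_add, hpow, one_mul]
  exact ⟨_, pow_succ_mem_of_mul_mem hS hx _, hinv, (Commute.self_pow x _).eq ▸ hinv⟩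

end MulClosed

theorem Function.End.isOfFinOrder_of_injective {α : Type*} [Finite α] {f : Function.End α}
    (hf : Function.Injective f) : IsOfFinOrder f :=
  let e := Equiv.ofBijective f (Finite.injective_iff_bijective.mp hf)
  (Units.coeHom _).isOfFinOrder
    (Equiv.Perm.equivUnitsEnd.toMonoidHom.isOfFinOrder (isOfFinOrder_of_finite e))

theorem qualgebra_translations_subgroup_general {Q : Type*} [Finite Q] [Nonempty Q]
    (tri trid dia : Q → Q → Q)
    (h_inv : ∀ a b, trid (tri a b) b = a ∧ tri (trid a b) b = a)
    (h_comp : ∀ a b c, tri a (dia b c) = tri (tri a b) c) :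
    let SImg : Set (Q → Q) := {f | ∃ a : Q, f = fun x => tri x a}
    (id ∈ SImg) ∧
    (∀ f ∈ SImg, ∀ g ∈ SImg, f ∘ g ∈ SImg) ∧
    (∀ f ∈ SImg, ∃ g ∈ SImg, f ∘ g = id ∧ g ∘ f = id) := by
  intro SImg
  have comp_mem : ∀ f ∈ SImg, ∀ g ∈ SImg, f ∘ g ∈ SImg := by
    rintro _ ⟨b, rfl⟩ _ ⟨c, rfl⟩
    exact ⟨dia c b, funext fun x => (h_comp x c b).symm⟩
  have finite_order : ∀ f ∈ SImg, IsOfFinOrder (G := Function.End Q) f := by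
    rintro _ ⟨a, rfl⟩
    exact Function.End.isOfFinOrder_of_injective
      (Function.LeftInverse.injective (g := (trid · a)) fun x => (h_inv x a).1)
  obtain ⟨a⟩ := ‹Nonempty Q›
  exact ⟨(finite_order _ ⟨a, rfl⟩).one_mem_of_mul_mem comp_mem ⟨a, rfl⟩, comp_mem,
    fun f hf => (finite_order f hf).exists_inverse_mem_of_mul_mem comp_mem hf⟩

/-- For a nonempty finite qualgebra `Q`, the image `{S_a : a ∈ Q}` of the right-translation
map is a subgroup of the group of permutations of `Q`: it contains the identity, and is
closed under composition and under taking inverses. -/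
theorem qualgebra_translations_subgroup {Q : Type*} [Finite Q] [Nonempty Q]
    (tri trid dia : Q → Q → Q)
    (h_sd : ∀ a b c, tri (tri a b) c = tri (tri a c) (tri b c))
    (h_inv : ∀ a b, trid (tri a b) b = a ∧ tri (trid a b) b = a)
    (h_idem : ∀ a, tri a a = a)
    (h_comp : ∀ a b c, tri a (dia b c) = tri (tri a b) c)
    (h_d : ∀ a b c, tri (dia a b) c = dia (tri a c) (tri b c))
    (h_comm : ∀ a b, dia a b = dia b (tri a b)) :
    let SImg : Set (Q → Q) := {f | ∃ a : Q, f = fun x => tri x a}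
    (id ∈ SImg) ∧
    (∀ f ∈ SImg, ∀ g ∈ SImg, f ∘ g ∈ SImg) ∧
    (∀ f ∈ SImg, ∃ g ∈ SImg, f ∘ g = id ∧ g ∘ f = id) :=
  qualgebra_translations_subgroup_general tri trid dia h_inv h_comp
end

section
/- Let (Q, ⊲, ⊲̃, ⋄) be a qualgebra and a ∈ Q. Define Fix(a) = {x ∈ Q : x ⊲ a = x} and Stab(a) = {x ∈ Q : a ⊲ x = a}. Then both Fix(a) and Stab(a) are sub-qualgebras of Q (i.e., closed under ⊲, ⊲̃ and ⋄), and both contain the sub-qualgebra Q_a generated by a, that is, the smallest subset of Q containing a and closed under ⊲, ⊲̃ and ⋄. -/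
/-!
Closure of `Fix(a)` under `⊲` and `⋄` is self-distributivity and (QA_D); closure of `Stab(a)`
under `⋄` is (QA_Comp), and (QA_Comm) turns a `⊲`-product into a `⋄`-product. For `⊲̃` both
cases are reduced to `⊲` by right cancellation, since `x ↦ x ⊲ b` is injective by (Q_Inv).
Idempotence puts `a` in both sets, so both contain the sub-qualgebra generated by `a`.
-/

/-- A subset `T` of a qualgebra is closed under the three operations. -/
def QClosed {Q : Type*} (tri trid dia : Q → Q → Q) (T : Set Q) : Prop :=
  ∀ x ∈ T, ∀ y ∈ T, tri x y ∈ T ∧ trid x y ∈ T ∧ dia x y ∈ T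

section Qualgebra

variable {Q : Type*} {tri trid dia : Q → Q → Q} {a x y : Q}

theorem tri_left_injective (h_inv : ∀ a b, trid (tri a b) b = a) (b : Q) :
    Function.Injective (tri · b) :=
  Function.LeftInverse.injective (g := (trid · b)) fun x => h_inv x b

theorem tri_mem_fix (h_sd : ∀ a b c, tri (tri a b) c = tri (tri a c) (tri b c))
    (hx : tri x a = x) (hy : tri y a = y) : tri (tri x y) a = tri x y := by
  rw [h_sd, hx, hy]

theorem trid_mem_fix (h_sd : ∀ a b c, tri (tri a b) c = tri (tri a c) (tri b c))
    (h_inv_left : ∀ a b, trid (tri a b) b = a) (h_inv_right : ∀ a b, tri (trid a b) b = a)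
    (hx : tri x a = x) (hy : tri y a = y) : tri (trid x y) a = trid x y := by
  apply tri_left_injective h_inv_left y
  calc tri (tri (trid x y) a) y
      = tri (tri (trid x y) a) (tri y a) := by rw [hy]
    _ = tri (tri (trid x y) y) a := (h_sd _ _ _).symm
    _ = tri (trid x y) y := by rw [h_inv_right, hx]

theorem dia_mem_fix (h_d : ∀ a b c, tri (dia a b) c = dia (tri a c) (tri b c))
    (hx : tri x a = x) (hy : tri y a = y) : tri (dia x y) a = dia x y := by
  rw [h_d, hx, hy]

theorem qclosed_fix (h_sd : ∀ a b c, tri (tri a b) c = tri (tri a c) (tri b c))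
    (h_inv_left : ∀ a b, trid (tri a b) b = a) (h_inv_right : ∀ a b, tri (trid a b) b = a)
    (h_d : ∀ a b c, tri (dia a b) c = dia (tri a c) (tri b c)) (a : Q) :
    QClosed tri trid dia {x | tri x a = x} := fun _ hx _ hy =>
  ⟨tri_mem_fix h_sd hx hy, trid_mem_fix h_sd h_inv_left h_inv_right hx hy, dia_mem_fix h_d hx hy⟩

theorem dia_mem_stab (h_comp : ∀ a b c, tri a (dia b c) = tri (tri a b) c)
    (hx : tri a x = a) (hy : tri a y = a) : tri a (dia x y) = a := by
  rw [h_comp, hx, hy]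

theorem tri_mem_stab (h_comp : ∀ a b c, tri a (dia b c) = tri (tri a b) c)
    (h_comm : ∀ a b, dia a b = dia b (tri a b)) (hx : tri a x = a) (hy : tri a y = a) :
    tri a (tri x y) = a :=
  calc tri a (tri x y)
      = tri (tri a y) (tri x y) := by rw [hy]
    _ = tri a (dia x y) := by rw [← h_comp, ← h_comm]
    _ = a := dia_mem_stab h_comp hx hy

theorem trid_mem_stab (h_comp : ∀ a b c, tri a (dia b c) = tri (tri a b) c)
    (h_comm : ∀ a b, dia a b = dia b (tri a b))
    (h_inv_left : ∀ a b, trid (tri a b) b = a) (h_inv_right : ∀ a b, tri (trid a b) b = a)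
    (hx : tri a x = a) (hy : tri a y = a) : tri a (trid x y) = a := by
  apply tri_left_injective h_inv_left y
  calc tri (tri a (trid x y)) y
      = tri a (dia (trid x y) y) := (h_comp _ _ _).symm
    _ = tri a (dia y x) := by rw [h_comm, h_inv_right]
    _ = tri a y := by rw [dia_mem_stab h_comp hy hx, hy]

theorem qclosed_stab (h_comp : ∀ a b c, tri a (dia b c) = tri (tri a b) c)
    (h_comm : ∀ a b, dia a b = dia b (tri a b))
    (h_inv_left : ∀ a b, trid (tri a b) b = a) (h_inv_right : ∀ a b, tri (trid a b) b = a)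
    (a : Q) : QClosed tri trid dia {x | tri a x = a} := fun _ hx _ hy =>
  ⟨tri_mem_stab h_comp h_comm hx hy, trid_mem_stab h_comp h_comm h_inv_left h_inv_right hx hy,
    dia_mem_stab h_comp hx hy⟩

end Qualgebra

/-- In a qualgebra, `Fix(a) = {x : x ⊲ a = x}` and `Stab(a) = {x : a ⊲ x = a}` are
sub-qualgebras, and both contain the sub-qualgebra generated by `a` (the smallest subset
containing `a` and closed under the three operations). -/
theorem qualgebra_fix_stab {Q : Type*} (tri trid dia : Q → Q → Q)
    (h_sd : ∀ a b c, tri (tri a b) c = tri (tri a c) (tri b c))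
    (h_inv : ∀ a b, trid (tri a b) b = a ∧ tri (trid a b) b = a)
    (h_idem : ∀ a, tri a a = a)
    (h_comp : ∀ a b c, tri a (dia b c) = tri (tri a b) c)
    (h_d : ∀ a b c, tri (dia a b) c = dia (tri a c) (tri b c))
    (h_comm : ∀ a b, dia a b = dia b (tri a b))
    (a : Q) :
    QClosed tri trid dia {x | tri x a = x} ∧
    QClosed tri trid dia {x | tri a x = a} ∧
    ⋂₀ {T : Set Q | a ∈ T ∧ QClosed tri trid dia T} ⊆ {x | tri x a = x} ∧
    ⋂₀ {T : Set Q | a ∈ T ∧ QClosed tri trid dia T} ⊆ {x | tri a x = a} := by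
  have h_inv_left : ∀ a b, trid (tri a b) b = a := fun a b => (h_inv a b).1
  have h_inv_right : ∀ a b, tri (trid a b) b = a := fun a b => (h_inv a b).2
  have hfix := qclosed_fix h_sd h_inv_left h_inv_right h_d a
  have hstab := qclosed_stab h_comp h_comm h_inv_left h_inv_right a
  exact ⟨hfix, hstab, Set.sInter_subset_of_mem ⟨h_idem a, hfix⟩,
    Set.sInter_subset_of_mem ⟨h_idem a, hstab⟩⟩
end

section
/- A non-trivial qualgebra or squandle has at least 4 elements. Precisely: (i) if (Q, ⊲, ⊲̃, ς) is a squandle whose underlying set has at most 3 elements, then a ⊲ b = a for all a,b ∈ Q; (ii) if (Q, ⊲, ⊲̃, ⋄) is a qualgebra whose underlying set has at most 3 elements, then a ⊲ b = a for all a,b ∈ Q. -/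
/-!
Suppose `a ⊲ b ≠ a`. Right translation by `b` is injective and fixes `b`, so on at most three
elements it moves `a` and `a ⊲ b` and fixes nothing but `b`. The element `b²` (resp. `b ⋄ b`)
is fixed by it, since `b² ⊲ b = (b ⊲ b)² = b²`, hence equals `b`. Then
`a ⊲ b = a ⊲ b² = (a ⊲ b) ⊲ b`, and injectivity gives `a = a ⊲ b`.
-/

open Function

lemma eq_or_eq_or_eq_of_card_le_three {Q : Type*} [Finite Q] (hcard : Nat.card Q ≤ 3)
    {a b c : Q} (hab : a ≠ b) (hac : a ≠ c) (hbc : b ≠ c) (x : Q) :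
    x = a ∨ x = b ∨ x = c := by
  classical
  have := Fintype.ofFinite Q
  by_contra! hx
  obtain ⟨hxa, hxb, hxc⟩ := hx
  have hfour : ({x, a, b, c} : Finset Q).card = 4 := by
    simp [Finset.card_insert_of_notMem, *]
  have := Finset.card_le_univ ({x, a, b, c} : Finset Q)
  rw [Nat.card_eq_fintype_card] at hcard
  omega

lemma Function.Injective.eq_self_of_card_le_three {Q : Type*} [Finite Q]
    (hcard : Nat.card Q ≤ 3) {f : Q → Q} (hf : Injective f) {b s : Q} (hb : IsFixedPt f b)
    (hs : IsFixedPt f s) (hsb : s ≠ b) (a : Q) : f a = a := by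
  by_contra hfa
  have hba : b ≠ a := fun h => hfa (h ▸ hb)
  have hbfa : b ≠ f a := fun h => hba (hf (hb.eq.trans h))
  rcases eq_or_eq_or_eq_of_card_le_three hcard hba hbfa (Ne.symm hfa) s with h | h | h
  · exact hsb h
  · exact hfa (h ▸ hs)
  · exact hfa (hf (h ▸ hs))

lemma tri_eq_self_of_card_le_three {Q : Type*} [Finite Q] (hcard : Nat.card Q ≤ 3)
    (tri : Q → Q → Q) {b s : Q} (hinj : Injective (tri · b)) (hb : tri b b = b)
    (hs : tri s b = s) (hsq : ∀ a, tri a s = tri (tri a b) b) (a : Q) : tri a b = a := by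
  by_cases hsb : s = b
  · subst hsb
    exact hinj (hsq a).symm
  · exact hinj.eq_self_of_card_le_three hcard hb hs hsb a

/-- A non-trivial qualgebra or squandle has at least 4 elements: (i) any squandle with at
most 3 elements is trivial; (ii) any qualgebra with at most 3 elements is trivial. -/
theorem small_qualgebra_squandle_trivial :
    (∀ (Q : Type) (_ : Finite Q) (tri trid : Q → Q → Q) (sq : Q → Q),
      (∀ a b c, tri (tri a b) c = tri (tri a c) (tri b c)) →
      (∀ a b, trid (tri a b) b = a ∧ tri (trid a b) b = a) →
      (∀ a, tri a a = a) →
      (∀ a b, tri a (sq b) = tri (tri a b) b) →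
      (∀ a b, tri (sq a) b = sq (tri a b)) →
      Nat.card Q ≤ 3 → ∀ a b : Q, tri a b = a) ∧
    (∀ (Q : Type) (_ : Finite Q) (tri trid dia : Q → Q → Q),
      (∀ a b c, tri (tri a b) c = tri (tri a c) (tri b c)) →
      (∀ a b, trid (tri a b) b = a ∧ tri (trid a b) b = a) →
      (∀ a, tri a a = a) →
      (∀ a b c, tri a (dia b c) = tri (tri a b) c) →
      (∀ a b c, tri (dia a b) c = dia (tri a c) (tri b c)) →
      (∀ a b, dia a b = dia b (tri a b)) →
      Nat.card Q ≤ 3 → ∀ a b : Q, tri a b = a) := by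
  constructor
  · intro Q _ tri trid sq _ hinv hidem hsq₁ hsq₂ hcard a b
    have hinj : Injective (tri · b) :=
      LeftInverse.injective (g := (trid · b)) fun x => (hinv x b).1
    refine tri_eq_self_of_card_le_three hcard tri hinj (hidem b) ?_ (fun x => hsq₁ x b) a
    rw [hsq₂, hidem]
  · intro Q _ tri trid dia _ hinv hidem hcomp hdist _ hcard a b
    have hinj : Injective (tri · b) :=
      LeftInverse.injective (g := (trid · b)) fun x => (hinv x b).1
    refine tri_eq_self_of_card_le_three hcard tri hinj (hidem b) ?_ (fun x => hcomp x b b) a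
    rw [hdist, hidem]
end

section
/- For every choice of parameters u, v ∈ {p, q, s}, the operation ⋄ on P satisfies: (i) ⋄ is commutative; (ii) ⋄ is not cancellative, i.e., there exist x, y, z ∈ P with x ⋄ y = x ⋄ z and y ≠ z; (iii) ⋄ has a two-sided neutral element if and only if u = q; (iv) ⋄ is associative if and only if u = s and (v = s or v = q); (v) ⋄ is never simultaneously unital and associative. -/
/-- The 4-element set `P = {p, q, r, s}`. -/
inductive P4 : Type
  | p | q | r | s
  deriving DecidableEq

/-- The involution `τ` of `P` exchanging `p` and `q` and fixing `r` and `s`. -/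
def tau : P4 → P4
  | .p => .q
  | .q => .p
  | .r => .r
  | .s => .s

/-- The qualgebra operation `⋄` on `P` with parameters `u, v ∈ {p, q, s}`. -/
def diaP (u v : P4) : P4 → P4 → P4
  | .r, .r => .s
  | .r, _ => .r
  | _, .r => .r
  | .s, .s => .s
  | .q, .s => u
  | .s, .q => u
  | .p, .s => tau u
  | .s, .p => tau u
  | .p, .q => .s
  | .q, .p => .s
  | .q, .q => v
  | .p, .p => tau v

theorem tau_eq_s_iff {u : P4} : tau u = .s ↔ u = .s := by
  cases u <;> decide

theorem diaP_comm (u v x y : P4) : diaP u v x y = diaP u v y x := by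
  cases x <;> cases y <;> rfl

theorem diaP_r_left (u v : P4) {x : P4} (hx : x ≠ .r) : diaP u v .r x = .r := by
  cases x <;> trivial

theorem diaP_not_left_cancel (u v : P4) : ∃ x y z : P4, diaP u v x y = diaP u v x z ∧ y ≠ z :=
  ⟨.r, .p, .q, by rw [diaP_r_left u v (by decide), diaP_r_left u v (by decide)], by decide⟩

/-- `p` and `q` multiply to `s` and `r ⋄ r = s`, so only `s` can be neutral, and `s ⋄ q = u`. -/
theorem diaP_neutral_iff (u v e : P4) :
    (∀ x : P4, diaP u v e x = x ∧ diaP u v x e = x) ↔ e = .s ∧ u = .q := by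
  constructor
  · intro h
    cases e
    · exact nomatch (h .q).1
    · exact nomatch (h .p).1
    · exact nomatch (h .r).1
    · exact ⟨rfl, (h .q).1⟩
  · rintro ⟨rfl, rfl⟩ x
    cases x <;> exact ⟨rfl, rfl⟩

theorem diaP_unital_iff (u v : P4) :
    (∃ e : P4, ∀ x : P4, diaP u v e x = x ∧ diaP u v x e = x) ↔ u = .q := by
  simp only [diaP_neutral_iff, exists_eq_left]

theorem diaP_assoc_iff (u v : P4) :
    (∀ x y z : P4, diaP u v (diaP u v x y) z = diaP u v x (diaP u v y z)) ↔
      u = .s ∧ (v = .s ∨ v = .q) := by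
  constructor
  · intro h
    -- `(p ⋄ r) ⋄ r = r ⋄ r = s` while `p ⋄ (r ⋄ r) = p ⋄ s = τ u`
    have hu : u = .s := tau_eq_s_iff.mp (h .p .r .r).symm
    subst hu
    -- `p ⋄ (p ⋄ q) = p ⋄ s = s` while `(p ⋄ p) ⋄ q = τ v ⋄ q`, which is `s` only for `τ v ∈ {p, s}`
    have hv := h .p .p .q
    cases v <;> simp_all [diaP, tau]
  · rintro ⟨rfl, rfl | rfl⟩ <;> intro x y z <;> cases x <;> cases y <;> cases z <;> rfl

theorem qualgebra4_operation_properties_general (u v : P4) :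
    (∀ x y : P4, diaP u v x y = diaP u v y x) ∧
    (∃ x y z : P4, diaP u v x y = diaP u v x z ∧ y ≠ z) ∧
    ((∃ e : P4, ∀ x : P4, diaP u v e x = x ∧ diaP u v x e = x) ↔ u = P4.q) ∧
    ((∀ x y z : P4, diaP u v (diaP u v x y) z = diaP u v x (diaP u v y z)) ↔
      (u = P4.s ∧ (v = P4.s ∨ v = P4.q))) ∧
    ¬ ((∃ e : P4, ∀ x : P4, diaP u v e x = x ∧ diaP u v x e = x) ∧
       (∀ x y z : P4, diaP u v (diaP u v x y) z = diaP u v x (diaP u v y z))) := by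
  refine ⟨diaP_comm u v, diaP_not_left_cancel u v, diaP_unital_iff u v, diaP_assoc_iff u v, ?_⟩
  rintro ⟨hunit, hassoc⟩
  have hq : u = .q := (diaP_unital_iff u v).mp hunit
  have hs : u = .s := ((diaP_assoc_iff u v).mp hassoc).1
  exact absurd (hq.symm.trans hs) (by decide)

/-- Properties of the operation `⋄_{u,v}` on `P` for `u, v ∈ {p, q, s}`: it is always
commutative and never cancellative; it is unital iff `u = q`; it is associative iff
`u = s` and `v ∈ {s, q}`; it is never simultaneously unital and associative. -/
theorem qualgebra4_operation_properties (u v : P4)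
    (hu : u ∈ ({P4.p, P4.q, P4.s} : Set P4)) (hv : v ∈ ({P4.p, P4.q, P4.s} : Set P4)) :
    (∀ x y : P4, diaP u v x y = diaP u v y x) ∧
    (∃ x y z : P4, diaP u v x y = diaP u v x z ∧ y ≠ z) ∧
    ((∃ e : P4, ∀ x : P4, diaP u v e x = x ∧ diaP u v x e = x) ↔ u = P4.q) ∧
    ((∀ x y z : P4, diaP u v (diaP u v x y) z = diaP u v x (diaP u v y z)) ↔
      (u = P4.s ∧ (v = P4.s ∨ v = P4.q))) ∧
    ¬ ((∃ e : P4, ∀ x : P4, diaP u v e x = x ∧ diaP u v x e = x) ∧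
       (∀ x y z : P4, diaP u v (diaP u v x y) z = diaP u v x (diaP u v y z))) :=
  qualgebra4_operation_properties_general u v
end

section
/- Let n be an integer with n > 2, and consider the dihedral quandle operation on ℤ/nℤ given by a ⊲ b = 2b − a (mod n). Then there exists no binary operation ⋄ on ℤ/nℤ satisfying the translation composability axiom a ⊲ (b ⋄ c) = (a ⊲ b) ⊲ c for all a, b, c ∈ ℤ/nℤ. In particular, the dihedral quandle on ℤ/nℤ (n > 2) cannot be turned into a qualgebra. -/
/-! Comparing the axiom at `a = 0` and `a = 1` (with `b = c = 0`) gives `-1 = 1`, i.e. `2 = 0`,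
which fails in `ℤ/nℤ` for `n > 2`. -/

theorem two_eq_zero_of_dihedral_comp {R : Type*} [Ring R] (dia : R → R → R)
    (h : ∀ a b c : R, 2 * dia b c - a = 2 * c - (2 * b - a)) : (2 : R) = 0 := by
  have h0 := h 0 0 0
  have h1 := h 1 0 0
  simp only [mul_zero, sub_zero, zero_sub] at h0 h1
  rw [h0, zero_sub, neg_neg] at h1
  rw [← one_add_one_eq_two]
  nth_rw 1 [← h1]
  exact neg_add_cancel 1

theorem ZMod.two_ne_zero_of_two_lt {n : ℕ} (hn : 2 < n) : (2 : ZMod n) ≠ 0 := by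
  intro h
  have hdvd : n ∣ 2 := (ZMod.natCast_eq_zero_iff 2 n).mp (by exact_mod_cast h)
  exact absurd (Nat.le_of_dvd two_pos hdvd) (by omega)

/-- For `n > 2`, the dihedral quandle `a ⊲ b = 2b − a` on `ℤ/nℤ` admits no binary
operation `⋄` satisfying the translation composability axiom `a ⊲ (b ⋄ c) = (a ⊲ b) ⊲ c`;
in particular, it cannot be turned into a qualgebra. -/
theorem dihedral_no_qualgebra (n : ℕ) (hn : 2 < n) :
    ¬ ∃ dia : ZMod n → ZMod n → ZMod n,
        ∀ a b c : ZMod n, 2 * dia b c - a = 2 * c - (2 * b - a) := by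
  rintro ⟨dia, h⟩
  exact ZMod.two_ne_zero_of_two_lt hn (two_eq_zero_of_dihedral_comp dia h)
end

section
/- Let (Q, ⊲, ⊲̃, ⋄) be a qualgebra and χ, λ : Q × Q → ℤ two maps. If for all a, b, c ∈ Q one has (C4) χ(a⋄b, c) + λ(a⊲c, b⊲c) = χ(a,c) + χ(b,c) + λ(a,b) and (C5) χ(a,b) + λ(a,b) = λ(b, a⊲b), then for all a, b, c ∈ Q one also has (C1) χ(a,b) + χ(a⊲b, c) = χ(a⊲c, b⊲c) + χ(a,c) and (C2) χ(a,a) = 0. -/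
/-!
Condition (C4) expresses `χ(a ⋄ b, c)` through `a` and `b`; evaluating it on both sides of
`a ⋄ b = b ⋄ (a ⊲ b)` and eliminating `λ` with (C5), once at `(a, b)` and once at
`(a ⊲ c, b ⊲ c)`, gives (C1) after self-distributivity identifies `(a ⊲ b) ⊲ c` with
`(a ⊲ c) ⊲ (b ⊲ c)`. (C2) is (C5) at `(a, a)` together with idempotence.
-/

section

variable {Q : Type*} {tri dia : Q → Q → Q} {chi lam : Q → Q → ℤ}

theorem chi_self_eq_zero_of_idem (h_idem : ∀ a, tri a a = a)
    (hC5 : ∀ a b, chi a b + lam a b = lam b (tri a b)) (a : Q) :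
    chi a a = 0 := by
  have h := hC5 a a
  rw [h_idem a] at h
  linarith

theorem chi_add_lam_sub_lam_eq_of_comm (h_comm : ∀ a b, dia a b = dia b (tri a b))
    (hC4 : ∀ a b c, chi (dia a b) c + lam (tri a c) (tri b c)
      = chi a c + chi b c + lam a b) (a b c : Q) :
    chi a c + lam a b - lam (tri a c) (tri b c)
      = chi (tri a b) c + lam b (tri a b) - lam (tri b c) (tri (tri a b) c) := by
  have hab := hC4 a b c
  have hba := hC4 b (tri a b) c
  rw [← h_comm a b] at hba
  linarith

theorem chi_cocycle_of_comm_sd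
    (h_sd : ∀ a b c, tri (tri a b) c = tri (tri a c) (tri b c))
    (h_comm : ∀ a b, dia a b = dia b (tri a b))
    (hC4 : ∀ a b c, chi (dia a b) c + lam (tri a c) (tri b c)
      = chi a c + chi b c + lam a b)
    (hC5 : ∀ a b, chi a b + lam a b = lam b (tri a b)) (a b c : Q) :
    chi a b + chi (tri a b) c = chi (tri a c) (tri b c) + chi a c := by
  have hswap := chi_add_lam_sub_lam_eq_of_comm h_comm hC4 a b c
  have h5 := hC5 a b
  have h5' := hC5 (tri a c) (tri b c)
  rw [← h_sd a b c] at h5'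
  linarith

end

theorem qualgebra_cocycle_redundant_axioms_general {Q : Type*} (tri dia : Q → Q → Q)
    (h_sd : ∀ a b c, tri (tri a b) c = tri (tri a c) (tri b c))
    (h_idem : ∀ a, tri a a = a)
    (h_comm : ∀ a b, dia a b = dia b (tri a b))
    (chi lam : Q → Q → ℤ)
    (hC4 : ∀ a b c, chi (dia a b) c + lam (tri a c) (tri b c)
      = chi a c + chi b c + lam a b)
    (hC5 : ∀ a b, chi a b + lam a b = lam b (tri a b)) :
    (∀ a b c, chi a b + chi (tri a b) c = chi (tri a c) (tri b c) + chi a c) ∧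
    (∀ a, chi a a = 0) :=
  ⟨chi_cocycle_of_comm_sd h_sd h_comm hC4 hC5, chi_self_eq_zero_of_idem h_idem hC5⟩

/-- For maps `χ, λ : Q × Q → ℤ` on a qualgebra `Q`, the 2-cocycle conditions (C1) and (C2)
follow from conditions (C4) and (C5). -/
theorem qualgebra_cocycle_redundant_axioms {Q : Type*} (tri trid dia : Q → Q → Q)
    (h_sd : ∀ a b c, tri (tri a b) c = tri (tri a c) (tri b c))
    (h_inv : ∀ a b, trid (tri a b) b = a ∧ tri (trid a b) b = a)
    (h_idem : ∀ a, tri a a = a)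
    (h_comp : ∀ a b c, tri a (dia b c) = tri (tri a b) c)
    (h_d : ∀ a b c, tri (dia a b) c = dia (tri a c) (tri b c))
    (h_comm : ∀ a b, dia a b = dia b (tri a b))
    (chi lam : Q → Q → ℤ)
    (hC4 : ∀ a b c, chi (dia a b) c + lam (tri a c) (tri b c)
      = chi a c + chi b c + lam a b)
    (hC5 : ∀ a b, chi a b + lam a b = lam b (tri a b)) :
    (∀ a b c, chi a b + chi (tri a b) c = chi (tri a c) (tri b c) + chi a c) ∧
    (∀ a, chi a a = 0) :=
  qualgebra_cocycle_redundant_axioms_general tri dia h_sd h_idem h_comm chi lam hC4 hC5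
end

section
/- Let (Q, ⊲₀, ⋄) be a trivial qualgebra (a ⊲₀ b = a for all a,b, and ⋄ is commutative), equipped with a linear order ≤. Let SF(Q) be the abelian group of all symmetric forms λ : Q × Q → ℤ (λ(a,b) = λ(b,a)), and let ABF(Q) be the abelian group of all antisymmetric bilinear forms χ : Q × Q → ℤ (χ(a,b) + χ(b,a) = 0 and χ(a, b⋄c) = χ(a,b) + χ(a,c)). For χ ∈ ABF(Q), define λ_χ(a,b) = 0 if a ≤ b and λ_χ(a,b) = χ(b,a) otherwise. Then the abelian group Z²(Q) of qualgebra 2-cocycles of Q is the internal direct sum of the subgroup ℒ = {(0, λ) : λ ∈ SF(Q)} and the subgroup 𝒳 = {(χ, λ_χ) : χ ∈ ABF(Q)}; in particular Z²(Q) ≅ SF(Q) ⊕ ABF(Q). -/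
/-!
For the trivial quandle operation the cocycle conditions collapse: (C1) is vacuous, (C5) read
twice forces `χ` to be antisymmetric (hence (C2)), and (C4) becomes additivity of `χ` in its
first argument, which follows from (C3) by antisymmetry. So a cocycle is an antisymmetric
bilinear `χ` together with a `λ` satisfying `χ(a,b) + λ(a,b) = λ(b,a)`. The form `λ_χ` is one
such `λ`, and any two differ by a symmetric form.
-/

/-- The five qualgebra 2-cocycle conditions (C1)–(C5) for a pair of maps
`x = (χ, λ) : (Q × Q → ℤ) × (Q × Q → ℤ)`. -/
def IsQACocycle {Q : Type*} (tri dia : Q → Q → Q)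
    (x : (Q × Q → ℤ) × (Q × Q → ℤ)) : Prop :=
  ∀ a b c : Q,
    x.1 (a, b) + x.1 (tri a b, c) = x.1 (tri a c, tri b c) + x.1 (a, c) ∧
    x.1 (a, a) = 0 ∧
    x.1 (a, dia b c) = x.1 (a, b) + x.1 (tri a b, c) ∧
    x.1 (dia a b, c) + x.2 (tri a c, tri b c) = x.1 (a, c) + x.1 (b, c) + x.2 (a, b) ∧
    x.1 (a, b) + x.2 (a, b) = x.2 (b, tri a b)

namespace TrivialQualgebra

variable {Q : Type*}

theorem isQACocycle_iff (dia : Q → Q → Q) (x : (Q × Q → ℤ) × (Q × Q → ℤ)) :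
    IsQACocycle (fun a _ => a) dia x ↔
      (∀ a b, x.1 (a, b) + x.1 (b, a) = 0) ∧
      (∀ a b c, x.1 (a, dia b c) = x.1 (a, b) + x.1 (a, c)) ∧
      (∀ a b, x.1 (a, b) + x.2 (a, b) = x.2 (b, a)) := by
  constructor
  · intro hx
    have swap a b : x.1 (a, b) + x.2 (a, b) = x.2 (b, a) := (hx a b b).2.2.2.2
    refine ⟨fun a b => ?_, fun a b c => (hx a b c).2.2.1, swap⟩
    linarith [swap a b, swap b a]
  · rintro ⟨antisymm, bilin, swap⟩ a b c
    refine ⟨rfl, by linarith [antisymm a a], bilin a b c, ?_, swap a b⟩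
    linarith [antisymm (dia a b) c, bilin c a b, antisymm a c, antisymm b c]

/-- `ℒ = {(0, λ) : λ symmetric}`. -/
def symmetricPart : AddSubgroup ((Q × Q → ℤ) × (Q × Q → ℤ)) where
  carrier := {x | x.1 = 0 ∧ ∀ a b : Q, x.2 (a, b) = x.2 (b, a)}
  zero_mem' := ⟨rfl, fun _ _ => rfl⟩
  add_mem' := by
    rintro x y ⟨hx₁, hx₂⟩ ⟨hy₁, hy₂⟩
    exact ⟨by simp [hx₁, hy₁], fun a b => by simp [hx₂ a b, hy₂ a b]⟩
  neg_mem' := by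
    rintro x ⟨hx₁, hx₂⟩
    exact ⟨by simp [hx₁], fun a b => by simp [hx₂ a b]⟩

theorem isQACocycle_of_mem_symmetricPart (dia : Q → Q → Q) {x : (Q × Q → ℤ) × (Q × Q → ℤ)}
    (hx : x ∈ symmetricPart) : IsQACocycle (fun a _ => a) dia x := by
  obtain ⟨hx₁, hx₂⟩ := hx
  refine (isQACocycle_iff dia x).2 ⟨fun a b => ?_, fun a b c => ?_, fun a b => ?_⟩ <;>
    simp [hx₁, hx₂ a b]

variable [LinearOrder Q]

/-- The form `λ_χ`. -/
def lambdaOf (χ : Q × Q → ℤ) : Q × Q → ℤ := fun p => if p.1 ≤ p.2 then 0 else χ (p.2, p.1)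

theorem lambdaOf_zero : lambdaOf (0 : Q × Q → ℤ) = 0 := by
  funext p
  simp [lambdaOf]

theorem lambdaOf_add (χ ψ : Q × Q → ℤ) : lambdaOf (χ + ψ) = lambdaOf χ + lambdaOf ψ := by
  funext p
  simp only [lambdaOf, Pi.add_apply]
  split_ifs <;> simp

theorem lambdaOf_neg (χ : Q × Q → ℤ) : lambdaOf (-χ) = -lambdaOf χ := by
  funext p
  simp only [lambdaOf, Pi.neg_apply]
  split_ifs <;> simp

theorem add_lambdaOf_apply {χ : Q × Q → ℤ} (antisymm : ∀ a b, χ (a, b) + χ (b, a) = 0)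
    (a b : Q) : χ (a, b) + lambdaOf χ (a, b) = lambdaOf χ (b, a) := by
  simp only [lambdaOf]
  rcases lt_trichotomy a b with hab | rfl | hba
  · simp [hab.le, not_le.mpr hab]
  · linarith [antisymm a a]
  · simp [hba.le, not_le.mpr hba, antisymm a b]

/-- `𝒳 = {(χ, λ_χ) : χ antisymmetric bilinear}`. -/
def antisymmetricPart (dia : Q → Q → Q) : AddSubgroup ((Q × Q → ℤ) × (Q × Q → ℤ)) where
  carrier := {x | (∀ a b : Q, x.1 (a, b) + x.1 (b, a) = 0) ∧
    (∀ a b c : Q, x.1 (a, dia b c) = x.1 (a, b) + x.1 (a, c)) ∧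
    (∀ a b : Q, x.2 (a, b) = lambdaOf x.1 (a, b))}
  zero_mem' := ⟨fun _ _ => rfl, fun _ _ _ => rfl, by simp [lambdaOf_zero]⟩
  add_mem' := by
    rintro x y ⟨hx₁, hx₂, hx₃⟩ ⟨hy₁, hy₂, hy₃⟩
    refine ⟨fun a b => ?_, fun a b c => ?_, fun a b => ?_⟩
    · simp only [Prod.fst_add, Pi.add_apply]; linarith [hx₁ a b, hy₁ a b]
    · simp only [Prod.fst_add, Pi.add_apply]; linarith [hx₂ a b c, hy₂ a b c]
    · simp [lambdaOf_add, hx₃ a b, hy₃ a b]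
  neg_mem' := by
    rintro x ⟨hx₁, hx₂, hx₃⟩
    refine ⟨fun a b => ?_, fun a b c => ?_, fun a b => ?_⟩
    · simp only [Prod.fst_neg, Pi.neg_apply]; linarith [hx₁ a b]
    · simp only [Prod.fst_neg, Pi.neg_apply]; linarith [hx₂ a b c]
    · simp [lambdaOf_neg, hx₃ a b]

variable (dia : Q → Q → Q)

theorem isQACocycle_of_mem_antisymmetricPart {x : (Q × Q → ℤ) × (Q × Q → ℤ)}
    (hx : x ∈ antisymmetricPart dia) : IsQACocycle (fun a _ => a) dia x := by
  obtain ⟨antisymm, bilin, hlam⟩ := hx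
  refine (isQACocycle_iff dia x).2 ⟨antisymm, bilin, fun a b => ?_⟩
  rw [hlam, hlam]
  exact add_lambdaOf_apply antisymm a b

theorem symmetricPart_inf_antisymmetricPart : symmetricPart ⊓ antisymmetricPart dia = ⊥ := by
  refine eq_bot_iff.2 fun x ⟨⟨hx₁, _⟩, _, _, hlam⟩ => ?_
  refine Prod.ext hx₁ (funext fun ⟨a, b⟩ => ?_)
  simp [hlam a b, hx₁, lambdaOf_zero]

/-- The decomposition `z = (0, λ - λ_χ) + (χ, λ_χ)` of a cocycle `z = (χ, λ)`. -/
theorem exists_eq_add_of_isQACocycle {z : (Q × Q → ℤ) × (Q × Q → ℤ)}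
    (hz : IsQACocycle (fun a _ => a) dia z) :
    ∃ l ∈ symmetricPart, ∃ x ∈ antisymmetricPart dia, z = l + x := by
  obtain ⟨antisymm, bilin, swap⟩ := (isQACocycle_iff dia z).1 hz
  refine ⟨(0, z.2 - lambdaOf z.1), ⟨rfl, fun a b => ?_⟩, (z.1, lambdaOf z.1),
    ⟨antisymm, bilin, fun _ _ => rfl⟩, by simp⟩
  simp only [Pi.sub_apply]
  linarith [swap a b, add_lambdaOf_apply antisymm a b]

end TrivialQualgebra

open TrivialQualgebra in
theorem trivial_qualgebra_cocycles_direct_sum_general {Q : Type*} [LinearOrder Q]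
    (dia : Q → Q → Q) :
    let tri : Q → Q → Q := fun a _ => a
    let Z2 : Set ((Q × Q → ℤ) × (Q × Q → ℤ)) := {x | IsQACocycle tri dia x}
    let L : Set ((Q × Q → ℤ) × (Q × Q → ℤ)) :=
      {x | x.1 = 0 ∧ ∀ a b : Q, x.2 (a, b) = x.2 (b, a)}
    let X : Set ((Q × Q → ℤ) × (Q × Q → ℤ)) :=
      {x | (∀ a b : Q, x.1 (a, b) + x.1 (b, a) = 0) ∧
           (∀ a b c : Q, x.1 (a, dia b c) = x.1 (a, b) + x.1 (a, c)) ∧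
           (∀ a b : Q, x.2 (a, b) = if a ≤ b then 0 else x.1 (b, a))}
    L ⊆ Z2 ∧ X ⊆ Z2 ∧
    ((0 : (Q × Q → ℤ) × (Q × Q → ℤ)) ∈ L ∧ (∀ x ∈ L, ∀ y ∈ L, x + y ∈ L) ∧
      (∀ x ∈ L, -x ∈ L)) ∧
    ((0 : (Q × Q → ℤ) × (Q × Q → ℤ)) ∈ X ∧ (∀ x ∈ X, ∀ y ∈ X, x + y ∈ X) ∧
      (∀ x ∈ X, -x ∈ X)) ∧
    L ∩ X = {0} ∧
    (∀ z ∈ Z2, ∃ l ∈ L, ∃ x ∈ X, z = l + x) := by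
  intro tri Z2 L X
  refine ⟨fun _ => isQACocycle_of_mem_symmetricPart dia,
    fun _ => isQACocycle_of_mem_antisymmetricPart dia,
    ⟨symmetricPart.zero_mem, fun _ hx _ hy => symmetricPart.add_mem hx hy,
      fun _ hx => symmetricPart.neg_mem hx⟩,
    ⟨(antisymmetricPart dia).zero_mem, fun _ hx _ hy => (antisymmetricPart dia).add_mem hx hy,
      fun _ hx => (antisymmetricPart dia).neg_mem hx⟩,
    congrArg SetLike.coe (symmetricPart_inf_antisymmetricPart dia),
    fun _ => exists_eq_add_of_isQACocycle dia⟩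

/-- For a trivial qualgebra `(Q, ⊲₀, ⋄)` (with `a ⊲₀ b = a` and `⋄` commutative), endowed
with a linear order, the group `Z²(Q)` of qualgebra 2-cocycles is the internal direct sum
of the subgroup `ℒ = {(0, λ) : λ symmetric}` and the subgroup
`𝒳 = {(χ, λ_χ) : χ antisymmetric bilinear}`; in particular `Z²(Q) ≅ SF(Q) ⊕ ABF(Q)`. -/
theorem trivial_qualgebra_cocycles_direct_sum {Q : Type*} [LinearOrder Q]
    (dia : Q → Q → Q) (h_comm : ∀ a b, dia a b = dia b a) :
    let tri : Q → Q → Q := fun a _ => a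
    let Z2 : Set ((Q × Q → ℤ) × (Q × Q → ℤ)) := {x | IsQACocycle tri dia x}
    let L : Set ((Q × Q → ℤ) × (Q × Q → ℤ)) :=
      {x | x.1 = 0 ∧ ∀ a b : Q, x.2 (a, b) = x.2 (b, a)}
    let X : Set ((Q × Q → ℤ) × (Q × Q → ℤ)) :=
      {x | (∀ a b : Q, x.1 (a, b) + x.1 (b, a) = 0) ∧
           (∀ a b c : Q, x.1 (a, dia b c) = x.1 (a, b) + x.1 (a, c)) ∧
           (∀ a b : Q, x.2 (a, b) = if a ≤ b then 0 else x.1 (b, a))}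
    L ⊆ Z2 ∧ X ⊆ Z2 ∧
    ((0 : (Q × Q → ℤ) × (Q × Q → ℤ)) ∈ L ∧ (∀ x ∈ L, ∀ y ∈ L, x + y ∈ L) ∧
      (∀ x ∈ L, -x ∈ L)) ∧
    ((0 : (Q × Q → ℤ) × (Q × Q → ℤ)) ∈ X ∧ (∀ x ∈ X, ∀ y ∈ X, x + y ∈ X) ∧
      (∀ x ∈ X, -x ∈ X)) ∧
    L ∩ X = {0} ∧
    (∀ z ∈ Z2, ∃ l ∈ L, ∃ x ∈ X, z = l + x) :=
  trivial_qualgebra_cocycles_direct_sum_general dia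
end
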